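/- Let A be the adjacency matrix and D the degree matrix of a finite undirected graph, and let s_p(r) denote the p-th smallest eigenvalue of D - r·A. Suppose there is r_p > 1 such that for all r ≥ r_p the eigenvalue s_p(r) is simple, and s_p(r_p) < 0. Then for every r ≥ r_p the derivative of s_p with respect to r is strictly negative; in particular s_p is strictly decreasing on [r_p, ∞). -/

import Mathlib

open Matrix

/-- Ascending list of eigenvalues (with multiplicity) of a Hermitian real matrix. -/
noncomputable def sortEig {n : ℕ} {M : Matrix (Fin n) (Fin n) ℝ} (hM : M.IsHermitian) :
    Fin n → ℝ :=
  fun i => hM.eigenvalues (Tuple.sort hM.eigenvalues i)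

/-!
For `0 < r ≤ r'` the identity `D - r' A = (r'/r) (D - r A) - (r'/r - 1) D` and `D ⪰ 0` give
`D - r' A ⪯ (r'/r) (D - r A)` in the Loewner order. Sorted eigenvalues are monotone in that order
(Courant–Fischer), so `s_p(r') ≤ (r'/r) s_p(r)`: the ratio `s_p(r)/r` is non-increasing on
`(0, ∞)`. Once `s_p(r_p) < 0`, this forces `s_p(r) ≤ (r/r_p) s_p(r_p) < 0` for `r ≥ r_p`, makes
`s_p` strictly decreasing there, and bounds every right difference quotient of `s_p` at `r` by
`s_p(r)/r < 0`, hence also any derivative.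
-/

open Module Filter
open scoped RealInnerProductSpace

namespace OrthonormalBasis

variable {ι 𝕜 E : Type*} [Fintype ι] [RCLike 𝕜] [NormedAddCommGroup E] [InnerProductSpace 𝕜 E]

lemma inner_eq_zero_of_mem_span_image (b : OrthonormalBasis ι 𝕜 E) {S : Set ι} {x : E}
    (hx : x ∈ Submodule.span 𝕜 (b '' S)) {i : ι} (hi : i ∉ S) : inner 𝕜 (b i) x = 0 := by
  have hle : Submodule.span 𝕜 (b '' S) ≤ (𝕜 ∙ b i)ᗮ := by
    rw [Submodule.span_le]
    rintro _ ⟨j, hj, rfl⟩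
    exact Submodule.mem_orthogonal_singleton_iff_inner_right.2
      (b.orthonormal.2 fun hij => hi (hij ▸ hj))
  exact Submodule.mem_orthogonal_singleton_iff_inner_right.1 (hle hx)

lemma finrank_span_image_finset (b : OrthonormalBasis ι 𝕜 E) (S : Finset ι) :
    finrank 𝕜 (Submodule.span 𝕜 (b '' S)) = S.card := by
  have hli : LinearIndependent 𝕜 fun j : (S : Set ι) => b j :=
    b.orthonormal.linearIndependent.comp _ Subtype.val_injective
  rw [Set.image_eq_range, finrank_span_eq_card hli]
  simp

end OrthonormalBasis

namespace Matrix.IsHermitian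

variable {ι : Type*} [Fintype ι] [DecidableEq ι] {M : Matrix ι ι ℝ} (hM : M.IsHermitian)
include hM

lemma dotProduct_mulVec_eq_sum_eigenvalues_mul_sq (x : EuclideanSpace ℝ ι) :
    x.ofLp ⬝ᵥ M *ᵥ x.ofLp = ∑ i, hM.eigenvalues i * ⟪hM.eigenvectorBasis i, x⟫ ^ 2 := by
  set b := hM.eigenvectorBasis
  have hcoord (i : ι) : ⟪b i, WithLp.toLp 2 (M *ᵥ x.ofLp)⟫ = hM.eigenvalues i * ⟪b i, x⟫ := by
    have hsymm : Mᵀ = M := hM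
    simp only [EuclideanSpace.inner_eq_star_dotProduct, star_trivial]
    rw [dotProduct_comm, dotProduct_mulVec, ← mulVec_transpose, hsymm,
      hM.mulVec_eigenvectorBasis, smul_dotProduct, smul_eq_mul, dotProduct_comm]
  calc x.ofLp ⬝ᵥ M *ᵥ x.ofLp = ⟪x, WithLp.toLp 2 (M *ᵥ x.ofLp)⟫ := by
        simp [EuclideanSpace.inner_eq_star_dotProduct, dotProduct_comm]
    _ = ∑ i, ⟪x, b i⟫ * ⟪b i, WithLp.toLp 2 (M *ᵥ x.ofLp)⟫ := (b.sum_inner_mul_inner _ _).symm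
    _ = ∑ i, hM.eigenvalues i * ⟪b i, x⟫ ^ 2 := by
        simp only [hcoord, real_inner_comm x]
        exact Finset.sum_congr rfl fun i _ => by ring

lemma mul_sq_norm_le_dotProduct_mulVec {S : Set ι} {c : ℝ} (hc : ∀ i ∈ S, c ≤ hM.eigenvalues i)
    {x : EuclideanSpace ℝ ι} (hx : x ∈ Submodule.span ℝ (hM.eigenvectorBasis '' S)) :
    c * ‖x‖ ^ 2 ≤ x.ofLp ⬝ᵥ M *ᵥ x.ofLp := by
  rw [hM.dotProduct_mulVec_eq_sum_eigenvalues_mul_sq, ← hM.eigenvectorBasis.sum_sq_inner_right,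
    Finset.mul_sum]
  refine Finset.sum_le_sum fun i _ => ?_
  by_cases hi : i ∈ S
  · exact mul_le_mul_of_nonneg_right (hc i hi) (sq_nonneg _)
  · simp [hM.eigenvectorBasis.inner_eq_zero_of_mem_span_image hx hi]

lemma dotProduct_mulVec_le_mul_sq_norm {S : Set ι} {c : ℝ} (hc : ∀ i ∈ S, hM.eigenvalues i ≤ c)
    {x : EuclideanSpace ℝ ι} (hx : x ∈ Submodule.span ℝ (hM.eigenvectorBasis '' S)) :
    x.ofLp ⬝ᵥ M *ᵥ x.ofLp ≤ c * ‖x‖ ^ 2 := by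
  rw [hM.dotProduct_mulVec_eq_sum_eigenvalues_mul_sq, ← hM.eigenvectorBasis.sum_sq_inner_right,
    Finset.mul_sum]
  refine Finset.sum_le_sum fun i _ => ?_
  by_cases hi : i ∈ S
  · exact mul_le_mul_of_nonneg_right (hc i hi) (sq_nonneg _)
  · simp [hM.eigenvectorBasis.inner_eq_zero_of_mem_span_image hx hi]

end Matrix.IsHermitian

lemma Submodule.exists_mem_inf_ne_zero_of_finrank_lt {K V : Type*} [DivisionRing K]
    [AddCommGroup V] [Module K V] [FiniteDimensional K V] {s t : Submodule K V}
    (h : finrank K V < finrank K s + finrank K t) : ∃ x ∈ s, x ∈ t ∧ x ≠ 0 := by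
  by_contra! hst
  exact h.not_ge (Submodule.finrank_add_finrank_le_of_disjoint (Submodule.disjoint_def.2 hst))

theorem sortEig_le_mul_of_dotProduct_mulVec_le {n : ℕ} {M N : Matrix (Fin n) (Fin n) ℝ}
    (hM : M.IsHermitian) (hN : N.IsHermitian) {c : ℝ} (hc : 0 ≤ c)
    (h : ∀ x : Fin n → ℝ, x ⬝ᵥ M *ᵥ x ≤ c * (x ⬝ᵥ N *ᵥ x)) (k : Fin n) :
    sortEig hM k ≤ c * sortEig hN k := by
  -- Courant–Fischer: eigenvectors of `M` from sorted index `k` upwards and those of `N` up to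
  -- index `k` span subspaces of dimensions `n - k` and `k + 1`, which therefore meet.
  set σ := Tuple.sort hM.eigenvalues
  set τ := Tuple.sort hN.eigenvalues
  set V := Submodule.span ℝ (hM.eigenvectorBasis '' ((Finset.Ici k).image σ : Set (Fin n)))
  set W := Submodule.span ℝ (hN.eigenvectorBasis '' ((Finset.Iic k).image τ : Set (Fin n)))
  have hdim : finrank ℝ (EuclideanSpace ℝ (Fin n)) < finrank ℝ V + finrank ℝ W := by
    rw [finrank_euclideanSpace_fin, OrthonormalBasis.finrank_span_image_finset,
      OrthonormalBasis.finrank_span_image_finset, Finset.card_image_of_injective _ σ.injective,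
      Finset.card_image_of_injective _ τ.injective, Fin.card_Ici, Fin.card_Iic]
    omega
  obtain ⟨x, hxV, hxW, hx0⟩ := Submodule.exists_mem_inf_ne_zero_of_finrank_lt hdim
  have hlow : sortEig hM k * ‖x‖ ^ 2 ≤ x.ofLp ⬝ᵥ M *ᵥ x.ofLp := by
    refine hM.mul_sq_norm_le_dotProduct_mulVec (fun i hi => ?_) hxV
    obtain ⟨j, hj, rfl⟩ := Finset.mem_image.1 hi
    exact Tuple.monotone_sort hM.eigenvalues (Finset.mem_Ici.1 hj)
  have hup : x.ofLp ⬝ᵥ N *ᵥ x.ofLp ≤ sortEig hN k * ‖x‖ ^ 2 := by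
    refine hN.dotProduct_mulVec_le_mul_sq_norm (fun i hi => ?_) hxW
    obtain ⟨j, hj, rfl⟩ := Finset.mem_image.1 hi
    exact Tuple.monotone_sort hN.eigenvalues (Finset.mem_Iic.1 hj)
  refine le_of_mul_le_mul_right ?_ (pow_pos (norm_pos_iff.2 hx0) 2)
  calc sortEig hM k * ‖x‖ ^ 2 ≤ x.ofLp ⬝ᵥ M *ᵥ x.ofLp := hlow
    _ ≤ c * (x.ofLp ⬝ᵥ N *ᵥ x.ofLp) := h x.ofLp
    _ ≤ c * (sortEig hN k * ‖x‖ ^ 2) := mul_le_mul_of_nonneg_left hup hc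
    _ = c * sortEig hN k * ‖x‖ ^ 2 := by ring

lemma HasDerivAt.le_of_sub_le_mul_sub {f : ℝ → ℝ} {d r m : ℝ} (hf : HasDerivAt f d r)
    (h : ∀ y, r < y → f y - f r ≤ m * (y - r)) : d ≤ m := by
  refine le_of_tendsto (hasDerivAt_iff_tendsto_slope_left_right.1 hf).2
    (eventually_nhdsWithin_of_forall fun y (hy : r < y) => ?_)
  rw [slope_def_field, div_le_iff₀ (sub_pos.2 hy)]
  exact h y hy

lemma dotProduct_diagonal_mulVec_nonneg {ι : Type*} [Fintype ι] [DecidableEq ι] {d : ι → ℝ}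
    (hd : ∀ i, 0 ≤ d i) (x : ι → ℝ) : 0 ≤ x ⬝ᵥ diagonal d *ᵥ x := by
  simpa using (posSemidef_diagonal_iff.2 hd).dotProduct_mulVec_nonneg x

lemma sortEig_sub_smul_le_div_mul {n : ℕ} {D A : Matrix (Fin n) (Fin n) ℝ}
    (hD : ∀ x, 0 ≤ x ⬝ᵥ D *ᵥ x) {r r' : ℝ} (h : (D - r • A).IsHermitian)
    (h' : (D - r' • A).IsHermitian) (hr : 0 < r) (hrr' : r ≤ r') (k : Fin n) :
    sortEig h' k ≤ r' / r * sortEig h k := by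
  refine sortEig_le_mul_of_dotProduct_mulVec_le h' h (div_nonneg (hr.le.trans hrr') hr.le)
    (fun x => ?_) k
  have hquad (t : ℝ) : x ⬝ᵥ (D - t • A) *ᵥ x = x ⬝ᵥ D *ᵥ x - t * (x ⬝ᵥ A *ᵥ x) := by
    rw [sub_mulVec, dotProduct_sub, smul_mulVec, dotProduct_smul, smul_eq_mul]
  have hc : 0 ≤ (r' / r - 1) * (x ⬝ᵥ D *ᵥ x) :=
    mul_nonneg (sub_nonneg.2 ((one_le_div hr).2 hrr')) (hD x)
  rw [hquad, hquad, mul_sub, ← mul_assoc, div_mul_cancel₀ _ hr.ne']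
  linarith

/-- if for all `r ≥ r_p` the `p`-th smallest eigenvalue `s_p(r)` of
`D - r•A` is simple (multiplicity one in the characteristic polynomial) and
`s_p(r_p) < 0`, then any derivative of `r ↦ s_p(r)` on `[r_p, ∞)` is strictly
negative, and `s_p` is strictly decreasing on `[r_p, ∞)`. -/
theorem stmt1 {n : ℕ} (A D : Matrix (Fin n) (Fin n) ℝ)
    (hA01 : ∀ i j, A i j = 0 ∨ A i j = 1)
    (hD : D = Matrix.diagonal fun i => ∑ j, A i j)
    (p : ℕ) (hp2 : 2 ≤ p) (hpn : p ≤ n)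
    (hH : ∀ r : ℝ, (D - r • A).IsHermitian)
    (rp : ℝ) (hrp : 1 < rp)
    (hneg : sortEig (hH rp) ⟨p - 1, by omega⟩ < 0) :
    (∀ r : ℝ, rp ≤ r → ∀ d : ℝ,
        HasDerivAt (fun t : ℝ => sortEig (hH t) ⟨p - 1, by omega⟩) d r → d < 0) ∧
    StrictAntiOn (fun t : ℝ => sortEig (hH t) ⟨p - 1, by omega⟩) (Set.Ici rp) := by
  set s : ℝ → ℝ := fun t => sortEig (hH t) ⟨p - 1, by omega⟩
  have hdeg (i : Fin n) : 0 ≤ ∑ j, A i j :=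
    Finset.sum_nonneg fun j _ => by rcases hA01 i j with h | h <;> simp [h]
  have hDnonneg : ∀ x, 0 ≤ x ⬝ᵥ D *ᵥ x := hD ▸ dotProduct_diagonal_mulVec_nonneg hdeg
  have hscale {r r' : ℝ} (hr : 0 < r) (hrr' : r ≤ r') : s r' ≤ r' / r * s r :=
    sortEig_sub_smul_le_div_mul hDnonneg (hH r) (hH r') hr hrr' _
  have hrp0 : 0 < rp := zero_lt_one.trans hrp
  have hs_neg {r : ℝ} (hr : rp ≤ r) : s r < 0 :=
    (hscale hrp0 hr).trans_lt (mul_neg_of_pos_of_neg (div_pos (hrp0.trans_le hr) hrp0) hneg)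
  refine ⟨fun r hr d hd => ?_, fun a ha b _ hab => ?_⟩
  · have hr0 : 0 < r := hrp0.trans_le hr
    refine (hd.le_of_sub_le_mul_sub fun y hy => ?_).trans_lt
      (div_neg_of_neg_of_pos (hs_neg hr) hr0)
    calc s y - s r ≤ y / r * s r - s r := by linarith [hscale hr0 hy.le]
      _ = s r / r * (y - r) := by field_simp
  · have ha0 : 0 < a := hrp0.trans_le ha
    calc s b ≤ b / a * s a := hscale ha0 hab.le
      _ < 1 * s a := mul_lt_mul_of_neg_right ((one_lt_div ha0).2 hab) (hs_neg ha)
      _ = s a := one_mul _
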